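/- Let h_y : ℝ → ℝ (for y ∈ [1/2,1]) be the function equal to 1 on the slice of the diamond W₀, equal to 4 for |x| ≥ y, and linear in |x| in between. Define h : {z ∈ ℂ : 1/2 ≤ Im z ≤ 1} → ℂ by h(x + iy) = h_y(x)·x + iy. Then h maps the closed strip S̄ = {z : 1/2 ≤ Im z ≤ 1} bijectively onto itself. -/

import Mathlib

/-!
On each horizontal line `Im z = y` the map is `x ↦ h_y(x) x`, and `h_y(x)` is the clamp to
`[1, 4]` of a function affine and increasing in `|x|` (for every `y`, not only on the strip).
So `h_y` is even, continuous, at least `1` and increasing in `|x|`; hence `x ↦ h_y(x) x` is an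
odd, continuous, strictly increasing map growing at least linearly, i.e. a bijection of `ℝ`.
Since `h` preserves imaginary parts, it is a bijection of `ℂ` mapping every horizontal strip
onto itself.
-/

open Set Complex

/-- The open diamond `W₀` with vertices `i`, `i/2`, `(3i+1)/4`, `(3i-1)/4`. -/
def W0 : Set ℂ := {z : ℂ | |z.re| + |z.im - 3/4| < 1/4}

/-- The slice function `h_y`: 1 on the slice of the diamond `W₀`, 4 for `|x| ≥ y`,
and linear in `|x|` in between. -/
noncomputable def hy (y x : ℝ) : ℝ :=
  if |x| + |y - 3/4| < 1/4 then 1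
  else if y ≤ |x| then 4
  else if y ≤ 3/4 then 6 * |x| - 6 * y + 4
  else (3 * |x| + 5 * y - 4) / (2 * y - 1)

/-- The map `h(x + iy) = h_y(x)·x + iy`. -/
noncomputable def hmap (z : ℂ) : ℂ := ⟨hy z.im z.re * z.re, z.im⟩

/-- The closed strip `S̄ = {z : 1/2 ≤ Im z ≤ 1}`. -/
def Sbar : Set ℂ := {z : ℂ | 1/2 ≤ z.im ∧ z.im ≤ 1}

open Filter Function

section EvenWeight

variable {H : ℝ → ℝ}

theorem apply_zero_le_of_even_of_monotoneOn (heven : ∀ x, H (-x) = H x) (hmono : MonotoneOn H (Ici 0))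
    (x : ℝ) : H 0 ≤ H x := by
  rcases le_total 0 x with hx | hx
  · exact hmono self_mem_Ici hx hx
  · rw [← heven x]
    exact hmono self_mem_Ici (neg_nonneg.2 hx) (neg_nonneg.2 hx)

theorem strictMono_mul_id_of_even_of_monotoneOn (heven : ∀ x, H (-x) = H x)
    (hmono : MonotoneOn H (Ici 0)) (hpos : 0 < H 0) : StrictMono fun x => H x * x := by
  have hodd : ∀ x, H (-x) * -x = -(H x * x) := fun x => by rw [heven]; ring
  have hIci : StrictMonoOn (fun x => H x * x) (Ici 0) := fun u hu v hv huv =>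
    calc H u * u ≤ H v * u := mul_le_mul_of_nonneg_right (hmono hu hv huv.le) hu
      _ < H v * v := mul_lt_mul_of_pos_left huv
          (hpos.trans_le (apply_zero_le_of_even_of_monotoneOn heven hmono v))
  refine StrictMonoOn.Iic_union_Ici (fun u hu v hv huv => ?_) hIci
  have := hIci (mem_Ici.2 (neg_nonneg.2 hv)) (mem_Ici.2 (neg_nonneg.2 hu)) (neg_lt_neg huv)
  simp only [hodd] at this
  linarith

theorem surjective_mul_id_of_even_of_monotoneOn (heven : ∀ x, H (-x) = H x)
    (hmono : MonotoneOn H (Ici 0)) (hpos : 0 < H 0) (hcont : Continuous H) :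
    Surjective fun x => H x * x := by
  have hbound := apply_zero_le_of_even_of_monotoneOn heven hmono
  refine (hcont.mul continuous_id).surjective ?_ ?_
  · refine tendsto_atTop_mono' atTop ?_ (tendsto_id.const_mul_atTop hpos)
    filter_upwards [eventually_ge_atTop 0] with x hx
    exact mul_le_mul_of_nonneg_right (hbound x) hx
  · refine tendsto_atBot_mono' atBot ?_ (tendsto_id.const_mul_atBot hpos)
    filter_upwards [eventually_le_atBot 0] with x hx
    exact mul_le_mul_of_nonpos_right (hbound x) hx

end EvenWeight

/-- The affine function of `u = |x|` that `h_y` follows between the diamond and `|x| = y`: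
it is `1` on the boundary of the diamond and `4` at `u = y`. -/
noncomputable def hyRamp (y u : ℝ) : ℝ :=
  if y ≤ 3/4 then 6 * u - 6 * y + 4 else (3 * u + 5 * y - 4) / (2 * y - 1)

theorem monotone_hyRamp (y : ℝ) : Monotone (hyRamp y) := by
  intro u v huv
  unfold hyRamp
  split_ifs with h
  · linarith
  · gcongr
    linarith

theorem continuous_hyRamp (y : ℝ) : Continuous (hyRamp y) := by
  unfold hyRamp
  split_ifs <;> fun_prop

theorem hyRamp_lt_one_iff (y u : ℝ) : hyRamp y u < 1 ↔ u + |y - 3/4| < 1/4 := by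
  unfold hyRamp
  split_ifs with h
  · rw [abs_of_nonpos (by linarith)]
    constructor <;> intro <;> linarith
  · rw [abs_of_pos (by linarith), div_lt_one (by linarith)]
    constructor <;> intro <;> linarith

theorem four_le_hyRamp_iff (y u : ℝ) : 4 ≤ hyRamp y u ↔ y ≤ u := by
  unfold hyRamp
  split_ifs with h
  · constructor <;> intro <;> linarith
  · rw [le_div_iff₀ (by linarith)]
    constructor <;> intro <;> linarith

theorem hy_eq_max_min_hyRamp (y x : ℝ) : hy y x = max 1 (min 4 (hyRamp y |x|)) := by
  simp only [hy, ← hyRamp_lt_one_iff y |x|, ← four_le_hyRamp_iff y |x|]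
  rw [← hyRamp.eq_1 y |x|]
  split_ifs with hlt hge
  · rw [min_eq_right (by linarith), max_eq_left hlt.le]
  · rw [min_eq_left hge, max_eq_right (by norm_num)]
  · rw [min_eq_right (not_le.1 hge).le, max_eq_right (not_lt.1 hlt)]

theorem hy_neg (y x : ℝ) : hy y (-x) = hy y x := by
  rw [hy, abs_neg, ← hy]

theorem bijective_hy_mul_id (y : ℝ) : Bijective fun x => hy y x * x := by
  have hclamp := hy_eq_max_min_hyRamp y
  have hmono : MonotoneOn (hy y) (Ici 0) := fun u hu v hv huv => by
    rw [hclamp, hclamp, abs_of_nonneg hu, abs_of_nonneg hv]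
    gcongr
    exact monotone_hyRamp y huv
  have hpos : 0 < hy y 0 := by
    rw [hclamp]
    exact zero_lt_one.trans_le (le_max_left _ _)
  have hcont : Continuous (hy y) := by
    rw [funext hclamp]
    exact continuous_const.max (continuous_const.min ((continuous_hyRamp y).comp continuous_abs))
  exact ⟨(strictMono_mul_id_of_even_of_monotoneOn (hy_neg y) hmono hpos).injective,
    surjective_mul_id_of_even_of_monotoneOn (hy_neg y) hmono hpos hcont⟩

theorem bijective_hmap : Bijective hmap := by
  refine ⟨fun z w hzw => ?_, fun w => ?_⟩
  · obtain ⟨hre, him⟩ : hy z.im z.re * z.re = hy w.im w.re * w.re ∧ z.im = w.im :=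
      Complex.ext_iff.1 hzw
    rw [← him] at hre
    exact Complex.ext ((bijective_hy_mul_id z.im).injective hre) him
  · obtain ⟨x, hx⟩ := (bijective_hy_mul_id w.im).surjective w.re
    exact ⟨⟨x, w.im⟩, Complex.ext hx rfl⟩

theorem stmt2 : Set.BijOn hmap Sbar Sbar := by
  refine ⟨fun z hz => hz, bijective_hmap.injective.injOn, fun w hw => ?_⟩
  obtain ⟨z, rfl⟩ := bijective_hmap.surjective w
  exact ⟨z, hw, rfl⟩
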